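/- Let M ≥ 1, let b ∈ ℂ^M have |b_k| = 1 for all k, and let A = {s(x) : x ∈ X} be the set of equivalent transmitted symbols. Let s_max ∈ A attain the maximum modulus over A. Then the four points s_max, i·s_max, −s_max, −i·s_max all belong to A, the minimum pairwise distance of this four-point set equals √2·|s_max|, and every set of four distinct points of A has minimum pairwise distance at most √2·|s_max|; that is, {±s_max, ±i·s_max} maximizes the minimum pairwise distance over all four-element subsets of A. -/

import Mathlib

/-!
Multiplying every coordinate by `i` permutes the one-bit alphabet, so `A` is invariant under
rotation by `i` and contains the square `{±s_max, ±i·s_max}`, whose closest vertices are adjacent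
ones, at distance `√2·|s_max|`; here `s_max ≠ 0` because flipping one coordinate of `x` changes
`s(x)`. Conversely `A` lies in the disk of radius `|s_max|`, and among four plane vectors two
make an angle of at most `π/2`: rotate the first onto the positive real axis; either another lies
in the closed right half-plane, or the other three lie in the open left half-plane and two of them
in the same closed upper or lower half-plane. Two points of the disk at such an angle are at
distance at most `√2·|s_max|`.
-/

/-- The one-bit alphabet `X = {x : x_k ∈ {(±1 ± i)/√2} for all k}`. -/
noncomputable def oneBit (M : ℕ) : Set (Fin M → ℂ) :=
  {x | ∀ k, x k ∈ ({(1 + Complex.I) / Real.sqrt 2, (1 - Complex.I) / Real.sqrt 2,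
    (-1 + Complex.I) / Real.sqrt 2, (-1 - Complex.I) / Real.sqrt 2} : Set ℂ)}

/-- The equivalent transmitted symbol `s(x) = (1/√M)·Σ_k conj(b_k)·x_k`. -/
noncomputable def symb {M : ℕ} (b : Fin M → ℂ) (x : Fin M → ℂ) : ℂ :=
  ((1 / Real.sqrt M : ℝ) : ℂ) * ∑ k, (starRingEnd ℂ) (b k) * x k

/-- The set `A = {s(x) : x ∈ X}` of equivalent transmitted symbols. -/
noncomputable def symbSet (M : ℕ) (b : Fin M → ℂ) : Set ℂ :=
  {s | ∃ x ∈ oneBit M, s = symb b x}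

open Complex ComplexConjugate
open scoped InnerProductSpace

theorem real_inner_eq_re_mul_re_add_im_mul_im (z w : ℂ) :
    ⟪z, w⟫_ℝ = z.re * w.re + z.im * w.im := by
  simp only [Complex.inner, mul_re, conj_re, conj_im]; ring

theorem real_inner_mul_left_mul_left (c z w : ℂ) : ⟪c * z, c * w⟫_ℝ = ‖c‖ ^ 2 * ⟪z, w⟫_ℝ := by
  simp only [real_inner_eq_re_mul_re_add_im_mul_im, mul_re, mul_im, ← normSq_eq_norm_sq,
    normSq_apply]
  ring

theorem norm_sub_le_sqrt_two_mul_of_inner_nonneg {E : Type*} [NormedAddCommGroup E]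
    [InnerProductSpace ℝ E] {x y : E} {R : ℝ} (hx : ‖x‖ ≤ R) (hy : ‖y‖ ≤ R)
    (hxy : 0 ≤ ⟪x, y⟫_ℝ) : ‖x - y‖ ≤ √2 * R := by
  have hR : 0 ≤ R := (norm_nonneg x).trans hx
  have : ‖x - y‖ ^ 2 ≤ (√2 * R) ^ 2 := by
    rw [norm_sub_sq_real, mul_pow, Real.sq_sqrt zero_le_two]
    nlinarith [norm_nonneg x, norm_nonneg y]
  exact le_of_sq_le_sq this (by positivity)

theorem exists_ne_mul_nonneg (t : Fin 3 → ℝ) : ∃ i j, i ≠ j ∧ 0 ≤ t i * t j := by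
  obtain ⟨i, j, hij, hsign⟩ :=
    Fintype.exists_ne_map_eq_of_card_lt (fun i => decide (0 ≤ t i)) (by simp)
  refine ⟨i, j, hij, ?_⟩
  by_cases hi : 0 ≤ t i
  · have hj : 0 ≤ t j := by simpa [hi] using hsign
    exact mul_nonneg hi hj
  · have hj : t j < 0 := by simpa [hi] using hsign
    exact (mul_pos_of_neg_of_neg (not_le.mp hi) hj).le

theorem exists_ne_real_inner_nonneg (z : Fin 4 → ℂ) : ∃ j k, j ≠ k ∧ 0 ≤ ⟪z j, z k⟫_ℝ := by
  set w : Fin 3 → ℂ := fun i => conj (z 0) * z i.succ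
  have hw : ∀ i, ⟪z 0, z i.succ⟫_ℝ = (w i).re := fun i => by
    simp [w, Complex.inner, mul_comm]
  by_cases hright : ∃ i, 0 ≤ (w i).re
  · obtain ⟨i, hi⟩ := hright
    exact ⟨0, i.succ, (Fin.succ_ne_zero i).symm, (hw i).symm ▸ hi⟩
  push Not at hright
  obtain ⟨i, j, hij, him⟩ := exists_ne_mul_nonneg fun i => (w i).im
  refine ⟨i.succ, j.succ, (Fin.succ_injective _).ne hij, ?_⟩
  have hpos : 0 < ‖conj (z 0)‖ ^ 2 * ⟪z i.succ, z j.succ⟫_ℝ := by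
    rw [← real_inner_mul_left_mul_left, real_inner_eq_re_mul_re_add_im_mul_im]
    exact add_pos_of_pos_of_nonneg (mul_pos_of_neg_of_neg (hright i) (hright j)) him
  exact (pos_of_mul_pos_right hpos (by positivity)).le

theorem exists_ne_norm_sub_le_sqrt_two_mul (z : Fin 4 → ℂ) {R : ℝ} (hz : ∀ j, ‖z j‖ ≤ R) :
    ∃ j k, j ≠ k ∧ ‖z j - z k‖ ≤ √2 * R := by
  obtain ⟨j, k, hjk, hinner⟩ := exists_ne_real_inner_nonneg z
  exact ⟨j, k, hjk, norm_sub_le_sqrt_two_mul_of_inner_nonneg (hz j) (hz k) hinner⟩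

theorem I_smul_mem_oneBit {M : ℕ} {x : Fin M → ℂ} (hx : x ∈ oneBit M) : I • x ∈ oneBit M := by
  intro k
  simp only [Set.mem_insert_iff, Set.mem_singleton_iff, Pi.smul_apply, smul_eq_mul]
  rcases hx k with h | h | h | (h : x k = _) <;> rw [h, mul_div_assoc']
  · exact Or.inr (Or.inr (Or.inl (by congr 1; linear_combination I_mul_I)))
  · exact Or.inl (by congr 1; linear_combination -I_mul_I)
  · exact Or.inr (Or.inr (Or.inr (by congr 1; linear_combination I_mul_I)))
  · exact Or.inr (Or.inl (by congr 1; linear_combination -I_mul_I))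

theorem symb_smul {M : ℕ} (b : Fin M → ℂ) (c : ℂ) (x : Fin M → ℂ) :
    symb b (c • x) = c * symb b x := by
  simp only [symb, Pi.smul_apply, smul_eq_mul, mul_left_comm _ c, ← Finset.mul_sum]

theorem symb_update_sub {M : ℕ} (b x : Fin M → ℂ) (k : Fin M) (a : ℂ) :
    symb b (Function.update x k a) - symb b x =
      ((1 / √M : ℝ) : ℂ) * (conj (b k) * (a - x k)) := by
  simp only [symb, ← mul_sub, ← Finset.sum_sub_distrib]
  rw [Finset.sum_eq_single k (fun j _ hj => by simp [hj]) (by simp)]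
  simp

theorem I_mul_mem_symbSet {M : ℕ} {b : Fin M → ℂ} {s : ℂ} (hs : s ∈ symbSet M b) :
    I * s ∈ symbSet M b := by
  obtain ⟨x, hx, rfl⟩ := hs
  exact ⟨I • x, I_smul_mem_oneBit hx, (symb_smul b I x).symm⟩

theorem exists_mem_symbSet_ne_zero {M : ℕ} {b : Fin M → ℂ} (k : Fin M) (hk : b k ≠ 0) :
    ∃ s ∈ symbSet M b, s ≠ 0 := by
  set c : ℂ := (1 + I) / √2
  have hc : c ≠ 0 := by simp [c, div_eq_zero_iff, Complex.ext_iff]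
  have hx : (fun _ => c) ∈ oneBit M := fun _ => Or.inl rfl
  have hy : Function.update (fun _ => c) k (-c) ∈ oneBit M := by
    intro j
    rcases eq_or_ne j k with rfl | hj
    · simp only [Function.update_self, c, Set.mem_insert_iff, Set.mem_singleton_iff]
      right; right; right; ring
    · simpa [hj] using hx j
  have hdiff := symb_update_sub b (fun _ => c) k (-c)
  have hM : (0 : ℝ) < M := Nat.cast_pos.mpr (Fin.pos k)
  by_contra! hzero
  rw [hzero _ ⟨_, hy, rfl⟩, hzero _ ⟨_, hx, rfl⟩, sub_self, eq_comm] at hdiff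
  simp only [one_div, ofReal_inv, mul_eq_zero, inv_eq_zero, ofReal_eq_zero, map_eq_zero] at hdiff
  rcases hdiff with hdiff | hdiff | hdiff
  · exact (Real.sqrt_pos.mpr hM).ne' hdiff
  · exact hk hdiff
  · exact hc (by linear_combination -hdiff / 2)

theorem sqrt_two_le_norm_sub {u v : ℂ} (hu : u ∈ ({1, I, -1, -I} : Set ℂ))
    (hv : v ∈ ({1, I, -1, -I} : Set ℂ)) (huv : u ≠ v) : √2 ≤ ‖u - v‖ := by
  rw [norm_def]
  refine Real.sqrt_le_sqrt ?_
  rcases hu with rfl | rfl | rfl | (rfl : u = _) <;>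
    rcases hv with rfl | rfl | rfl | (rfl : v = _) <;>
    first | exact absurd rfl huv | norm_num [normSq_apply]

theorem exists_mul_of_mem_square {s z : ℂ} (hz : z ∈ ({s, I * s, -s, -(I * s)} : Set ℂ)) :
    ∃ u ∈ ({1, I, -1, -I} : Set ℂ), z = u * s := by
  rcases hz with h | h | h | (h : z = _) <;> rw [h]
  exacts [⟨1, by simp, (one_mul s).symm⟩, ⟨I, by simp, rfl⟩, ⟨-1, by simp, (neg_one_mul s).symm⟩,
    ⟨-I, by simp, (neg_mul I s).symm⟩]

theorem sqrt_two_mul_norm_le_norm_sub {s z w : ℂ} (hz : z ∈ ({s, I * s, -s, -(I * s)} : Set ℂ))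
    (hw : w ∈ ({s, I * s, -s, -(I * s)} : Set ℂ)) (hzw : z ≠ w) : √2 * ‖s‖ ≤ ‖z - w‖ := by
  obtain ⟨u, hu, rfl⟩ := exists_mul_of_mem_square hz
  obtain ⟨v, hv, rfl⟩ := exists_mul_of_mem_square hw
  rw [← sub_mul, norm_mul]
  exact mul_le_mul_of_nonneg_right (sqrt_two_le_norm_sub hu hv (by rintro rfl; exact hzw rfl))
    (norm_nonneg s)

theorem norm_sub_I_mul_self (s : ℂ) : ‖s - I * s‖ = √2 * ‖s‖ := by
  rw [← one_sub_mul, norm_mul, norm_def, normSq_apply]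
  norm_num

theorem square_subset_symbSet {M : ℕ} {b : Fin M → ℂ} {s : ℂ} (hs : s ∈ symbSet M b) :
    ({s, I * s, -s, -(I * s)} : Set ℂ) ⊆ symbSet M b := by
  have hneg : ∀ z ∈ symbSet M b, -z ∈ symbSet M b := fun z hz => by
    simpa [← mul_assoc] using I_mul_mem_symbSet (I_mul_mem_symbSet hz)
  rintro z (h | h | h | (h : z = _)) <;> rw [h]
  exacts [hs, I_mul_mem_symbSet hs, hneg _ hs, hneg _ (I_mul_mem_symbSet hs)]

/-- If `s_max ∈ A` attains the maximum modulus over `A`, then the four points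
`±s_max, ±i·s_max` all lie in `A`, the minimum pairwise distance of this four-point set
equals `√2·|s_max|`, and any four distinct points of `A` have minimum pairwise distance
at most `√2·|s_max|`: the QPSK-like codebook `{±s_max, ±i·s_max}` maximizes the minimum
pairwise distance over all four-element subsets of `A`. -/
theorem four_point_codebook_optimal (M : ℕ) (hM : 1 ≤ M) (b : Fin M → ℂ)
    (hb : ∀ k, ‖b k‖ = 1) (smax : ℂ) (hmem : smax ∈ symbSet M b)
    (hmax : ∀ s ∈ symbSet M b, ‖s‖ ≤ ‖smax‖) :
    ({smax, Complex.I * smax, -smax, -(Complex.I * smax)} : Set ℂ) ⊆ symbSet M b ∧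
      IsLeast {d : ℝ | ∃ z ∈ ({smax, Complex.I * smax, -smax, -(Complex.I * smax)} : Set ℂ),
          ∃ w ∈ ({smax, Complex.I * smax, -smax, -(Complex.I * smax)} : Set ℂ),
          z ≠ w ∧ d = ‖z - w‖}
        (Real.sqrt 2 * ‖smax‖) ∧
      ∀ f : Fin 4 → ℂ, (∀ j, f j ∈ symbSet M b) → Function.Injective f →
        ∃ j k, j ≠ k ∧ ‖f j - f k‖ ≤ Real.sqrt 2 * ‖smax‖ := by
  obtain ⟨s₀, hs₀, hs₀_ne⟩ :=
    exists_mem_symbSet_ne_zero (b := b) ⟨0, hM⟩ (norm_ne_zero_iff.mp (by simp [hb]))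
  have hsmax : smax ≠ 0 := norm_pos_iff.mp ((norm_pos_iff.mpr hs₀_ne).trans_le (hmax _ hs₀))
  have hI : smax ≠ I * smax :=
    sub_ne_zero.mp (norm_ne_zero_iff.mp (by
      rw [norm_sub_I_mul_self]; exact mul_ne_zero (by positivity) (norm_ne_zero_iff.mpr hsmax)))
  refine ⟨square_subset_symbSet hmem,
    ⟨⟨smax, by simp, I * smax, by simp, hI, (norm_sub_I_mul_self smax).symm⟩, ?_⟩,
    fun f hf _ => exists_ne_norm_sub_le_sqrt_two_mul f fun j => hmax _ (hf j)⟩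
  rintro d ⟨z, hz, w, hw, hzw, rfl⟩
  exact sqrt_two_mul_norm_le_norm_sub hz hw hzw
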